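/- arXiv:1305.2438 — 2 statements merged into one kernel-verified Lean document; each statement's English description precedes it below -/
import Mathlib

section
/- Every k-core (a partition with no cell of hook length equal to k) is a k-shape: both its k-row shape and k-column shape are partitions (weakly decreasing sequences). -/
open Classical

structure YPartition where
  parts : ℕ → ℕ
  antitone' : ∀ i j : ℕ, i ≤ j → parts j ≤ parts i
  finite' : ∃ N : ℕ, ∀ i : ℕ, N ≤ i → parts i = 0

namespace YPartition

def empty : YPartition :=
  ⟨fun _ => 0, fun _ _ _ => le_rfl, ⟨0, fun _ _ => rfl⟩⟩

def Mem (lam : YPartition) (b : ℕ × ℕ) : Prop := b.2 < lam.parts b.1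

def Le (lam mu : YPartition) : Prop := ∀ i : ℕ, lam.parts i ≤ mu.parts i

noncomputable def conj (lam : YPartition) (j : ℕ) : ℕ :=
  @Nat.find (fun i => lam.parts i ≤ j) (Classical.decPred _)
    (by
      obtain ⟨N, hN⟩ := lam.finite'
      exact ⟨N, show lam.parts N ≤ j by rw [hN N le_rfl]; exact Nat.zero_le j⟩)

noncomputable def hook (lam : YPartition) (i j : ℕ) : ℕ :=
  (lam.parts i - j) + (lam.conj j - i) - 1

noncomputable def rsk (k : ℕ) (lam : YPartition) (i : ℕ) : ℕ :=
  Nat.card {j : ℕ | lam.Mem (i, j) ∧ lam.hook i j ≤ k}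

noncomputable def csk (k : ℕ) (lam : YPartition) (j : ℕ) : ℕ :=
  Nat.card {i : ℕ | lam.Mem (i, j) ∧ lam.hook i j ≤ k}

def IsKShape (k : ℕ) (lam : YPartition) : Prop :=
  (∀ i i' : ℕ, i ≤ i' → rsk k lam i' ≤ rsk k lam i) ∧
  (∀ j j' : ℕ, j ≤ j' → csk k lam j' ≤ csk k lam j)

def IsCore (p : ℕ) (lam : YPartition) : Prop :=
  ∀ i j : ℕ, lam.Mem (i, j) → lam.hook i j ≠ p

noncomputable def psize (lam : YPartition) : ℕ := Nat.card {b : ℕ × ℕ | lam.Mem b}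

noncomputable def intSize (k : ℕ) (lam : YPartition) : ℕ :=
  Nat.card {b : ℕ × ℕ | lam.Mem b ∧ k < lam.hook b.1 b.2}

noncomputable def bdrySize (k : ℕ) (lam : YPartition) : ℕ :=
  Nat.card {b : ℕ × ℕ | lam.Mem b ∧ lam.hook b.1 b.2 ≤ k}

noncomputable def union (lam mu : YPartition) : YPartition :=
  ⟨fun i => max (lam.parts i) (mu.parts i),
   fun i j h => max_le_max (lam.antitone' i j h) (mu.antitone' i j h),
   by
     obtain ⟨N, hN⟩ := lam.finite'
     obtain ⟨M, hM⟩ := mu.finite'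
     refine ⟨max N M, fun i hi => ?_⟩
     show max (lam.parts i) (mu.parts i) = 0
     rw [hN i (le_trans (le_max_left _ _) hi), hM i (le_trans (le_max_right _ _) hi)]
     simp⟩

end YPartition

open YPartition

def diagIdx (b : ℕ × ℕ) : ℤ := (b.2 : ℤ) - (b.1 : ℤ)

def cellDist (b b' : ℕ × ℕ) : ℕ := (diagIdx b - diagIdx b').natAbs

def Contiguous (k : ℕ) (b b' : ℕ × ℕ) : Prop :=
  cellDist b b' = k ∨ cellDist b b' = k + 1

def HasAddable (lam : YPartition) (i : ℕ) : Prop :=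
  i = 0 ∨ lam.parts i < lam.parts (i - 1)

def addCorner (lam : YPartition) (i : ℕ) : ℕ × ℕ := (i, lam.parts i)

def IsAddableCell (lam : YPartition) (b : ℕ × ℕ) : Prop :=
  HasAddable lam b.1 ∧ b.2 = lam.parts b.1

def HasRemovable (lam : YPartition) (i : ℕ) : Prop := lam.parts (i + 1) < lam.parts i

def remCorner (lam : YPartition) (i : ℕ) : ℕ × ℕ := (i, lam.parts i - 1)

def KConnectedBelow (k : ℕ) (lam : YPartition) (r r' : ℕ) : Prop :=
  r' < r ∧ HasAddable lam r ∧ HasAddable lam r' ∧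
    cellDist (addCorner lam r) (addCorner lam r') ≤ k + 1 ∧
    ∀ r'' : ℕ, r'' < r' → HasAddable lam r'' →
      ¬ cellDist (addCorner lam r) (addCorner lam r'') ≤ k + 1

def ContigConnected (k : ℕ) (lam : YPartition) (r r' : ℕ) : Prop :=
  KConnectedBelow k lam r r' ∧ Contiguous k (addCorner lam r) (addCorner lam r')

inductive InChain (k : ℕ) (lam : YPartition) (r : ℕ) : ℕ → Prop
  | refl : InChain k lam r r
  | step {s s' : ℕ} : InChain k lam r s → KConnectedBelow k lam s s' → InChain k lam r s'

noncomputable def iCC (k : ℕ) (lam : YPartition) (top bot : ℕ) (ct cb : Bool) : ℕ :=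
  Nat.card {s : ℕ | InChain k lam top s ∧ (if cb then bot ≤ s else bot < s) ∧
    (ct = true ∨ s ≠ top)}

noncomputable def rowUp (lam mu : YPartition) : ℕ := sSup {i : ℕ | lam.parts i < mu.parts i}

noncomputable def rowDown (lam mu : YPartition) : ℕ := sInf {i : ℕ | lam.parts i < mu.parts i}

noncomputable def chargeStepVal (k : ℕ) (sh : YPartition) (r r' : ℕ) : ℤ :=
  if r' ≤ r then (iCC k sh r r' true false : ℤ) else -(iCC k sh r' r false true : ℤ)

noncomputable def cochargeStepVal (k : ℕ) (sh : YPartition) (r r' : ℕ) : ℤ :=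
  if r' < r then -(iCC k sh r r' false false : ℤ) else (iCC k sh r' r true true : ℤ)

noncomputable def chargeLet (k : ℕ) (T : ℕ → YPartition) : ℕ → ℤ
  | 0 => 0
  | 1 => 0
  | n + 2 =>
    chargeLet k T (n + 1) +
      chargeStepVal k (T (n + 1)) (rowUp (T n) (T (n + 1)) + 1)
        (rowUp (T (n + 1)) (T (n + 2)))

noncomputable def cochargeLet (k : ℕ) (T : ℕ → YPartition) : ℕ → ℤ
  | 0 => 0
  | 1 => 0
  | n + 2 =>
    cochargeLet k T (n + 1) +
      cochargeStepVal k (T (n + 1)) (rowDown (T n) (T (n + 1)) + 1)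
        (rowDown (T (n + 1)) (T (n + 2)))

noncomputable def chargeTab (k : ℕ) (T : ℕ → YPartition) (N : ℕ) : ℤ :=
  ∑ n ∈ Finset.range N, chargeLet k T (n + 1)

noncomputable def cochargeTab (k : ℕ) (T : ℕ → YPartition) (N : ℕ) : ℤ :=
  ∑ n ∈ Finset.range N, cochargeLet k T (n + 1)

def skewSet (lam mu : YPartition) : Set (ℕ × ℕ) := {b | mu.Mem b ∧ ¬ lam.Mem b}

def IsStringOf (k : ℕ) (lam mu : YPartition) (ℓ : ℕ) (a : ℕ → ℕ × ℕ) : Prop :=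
  YPartition.Le lam mu ∧
  (∀ b : ℕ × ℕ, b ∈ skewSet lam mu ↔ ∃ i < ℓ, a i = b) ∧
  (∀ i j : ℕ, i < ℓ → j < ℓ → a i = a j → i = j) ∧
  (∀ i : ℕ, i + 1 < ℓ → (a (i + 1)).1 < (a i).1 ∧ Contiguous k (a i) (a (i + 1)))

def IsRowTypeStringOf (k : ℕ) (lam mu : YPartition) (ℓ : ℕ) (a : ℕ → ℕ × ℕ) : Prop :=
  IsStringOf k lam mu ℓ a ∧ ∀ i : ℕ, rsk k mu i = rsk k lam i

def IsColTypeStringOf (k : ℕ) (lam mu : YPartition) (ℓ : ℕ) (a : ℕ → ℕ × ℕ) : Prop :=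
  IsStringOf k lam mu ℓ a ∧ ∀ j : ℕ, csk k mu j = csk k lam j

def TranslateBy (v : ℤ × ℤ) (b b' : ℕ × ℕ) : Prop :=
  (b'.1 : ℤ) = (b.1 : ℤ) + v.1 ∧ (b'.2 : ℤ) = (b.2 : ℤ) + v.2

def IsRowMove (k ℓ r : ℕ) (lam mu : YPartition) : Prop :=
  1 ≤ r ∧ 1 ≤ ℓ ∧ IsKShape k lam ∧ IsKShape k mu ∧
  ∃ (c : ℕ → YPartition) (a : ℕ → ℕ → ℕ × ℕ),
    c 0 = lam ∧ c r = mu ∧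
    (∀ i < r, IsRowTypeStringOf k (c i) (c (i + 1)) ℓ (a i)) ∧
    (∀ i < r, ∃ v : ℤ × ℤ, ∀ t < ℓ, TranslateBy v (a 0 t) (a i t)) ∧
    (∀ i : ℕ, i + 1 < r → (a (i + 1) 0).2 = (a i 0).2 + 1)

def IsColMove (k ℓ r : ℕ) (lam mu : YPartition) : Prop :=
  1 ≤ r ∧ 1 ≤ ℓ ∧ IsKShape k lam ∧ IsKShape k mu ∧
  ∃ (c : ℕ → YPartition) (a : ℕ → ℕ → ℕ × ℕ),
    c 0 = lam ∧ c r = mu ∧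
    (∀ i < r, IsColTypeStringOf k (c i) (c (i + 1)) ℓ (a i)) ∧
    (∀ i < r, ∃ v : ℤ × ℤ, ∀ t < ℓ, TranslateBy v (a 0 t) (a i t)) ∧
    (∀ i : ℕ, i + 1 < r → (a (i + 1) (ℓ - 1)).1 = (a i (ℓ - 1)).1 + 1)

def IsMoveOf (k ℓ r : ℕ) (isRow : Bool) (lam mu : YPartition) : Prop :=
  if isRow then IsRowMove k ℓ r lam mu else IsColMove k ℓ r lam mu

def MoveRel (k : ℕ) (lam mu : YPartition) : Prop :=
  ∃ ℓ r : ℕ, IsRowMove k ℓ r lam mu ∨ IsColMove k ℓ r lam mu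

def IsCover (k : ℕ) (lam mu : YPartition) : Prop :=
  IsKShape k lam ∧ IsKShape k mu ∧
  ∃ (ℓ : ℕ) (a : ℕ → ℕ × ℕ), 1 ≤ ℓ ∧ IsStringOf k lam mu ℓ a ∧
    (∃ i : ℕ, rsk k lam i < rsk k mu i) ∧ (∃ j : ℕ, csk k lam j < csk k mu j)

noncomputable def topCellC (lam mu : YPartition) : ℕ × ℕ :=
  (rowUp lam mu, lam.parts (rowUp lam mu))

noncomputable def botCellC (lam mu : YPartition) : ℕ × ℕ :=
  (rowDown lam mu, lam.parts (rowDown lam mu))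

def CanContinueBelow (k : ℕ) (lam mu : YPartition) : Prop :=
  ∃ i : ℕ, HasAddable lam i ∧ i < rowDown lam mu ∧
    Contiguous k (botCellC lam mu) (addCorner lam i)

def CanContinueAbove (k : ℕ) (lam mu : YPartition) : Prop :=
  ∃ i : ℕ, HasAddable lam i ∧ rowUp lam mu < i ∧
    Contiguous k (addCorner lam i) (topCellC lam mu)

def RevContinueBelow (k : ℕ) (lam mu : YPartition) : Prop :=
  ∃ i : ℕ, HasRemovable mu i ∧ i < rowDown lam mu ∧
    Contiguous k (botCellC lam mu) (remCorner mu i)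

def RevContinueAbove (k : ℕ) (lam mu : YPartition) : Prop :=
  ∃ i : ℕ, HasRemovable mu i ∧ rowUp lam mu < i ∧
    Contiguous k (remCorner mu i) (topCellC lam mu)

def IsMaximalCover (k : ℕ) (lam mu : YPartition) : Prop :=
  IsCover k lam mu ∧ ¬ CanContinueAbove k lam mu ∧ ¬ CanContinueBelow k lam mu

def IsReverseMaximalCover (k : ℕ) (lam mu : YPartition) : Prop :=
  IsCover k lam mu ∧ ¬ RevContinueAbove k lam mu ∧ ¬ RevContinueBelow k lam mu

def StdKShapeTableau (k N : ℕ) (T : ℕ → YPartition) : Prop :=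
  T 0 = YPartition.empty ∧ ∀ n < N, IsCover k (T n) (T (n + 1))

def HorizStrip (lam mu : YPartition) : Prop :=
  YPartition.Le lam mu ∧ ∀ j : ℕ, mu.conj j ≤ lam.conj j + 1

def VertStrip (lam mu : YPartition) : Prop :=
  YPartition.Le lam mu ∧ ∀ i : ℕ, mu.parts i ≤ lam.parts i + 1

def IsStdKTableau (k N : ℕ) (T : ℕ → YPartition) : Prop :=
  T 0 = YPartition.empty ∧ (∀ n ≤ N, IsCore (k + 1) (T n)) ∧
  ∀ n < N, HorizStrip (T n) (T (n + 1)) ∧ VertStrip (T n) (T (n + 1)) ∧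
    bdrySize k (T (n + 1)) = bdrySize k (T n) + 1

def cellResidue (k : ℕ) (b : ℕ × ℕ) : ZMod (k + 1) :=
  (b.2 : ZMod (k + 1)) - (b.1 : ZMod (k + 1))

def GroundPos (lam : YPartition) (i j : ℕ) : Prop :=
  1 ≤ i ∧ lam.parts i ≤ j ∧ j < lam.parts (i - 1)

noncomputable def diagCount (k : ℕ) (e : ZMod (k + 1)) (b b' : ℕ × ℕ) : ℕ :=
  Nat.card {d : ℤ | min (diagIdx b) (diagIdx b') < d ∧
    d < max (diagIdx b) (diagIdx b') ∧ (d : ZMod (k + 1)) = e}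

noncomputable def upCell (lam mu : YPartition) : ℕ × ℕ :=
  (rowUp lam mu, lam.parts (rowUp lam mu))

def shiftU (S : Set (ℕ × ℕ)) : Set (ℕ × ℕ) := (fun b => (b.1 + 1, b.2)) '' S

/-! Shifting a boundary cell `(i + 1, j)` of a `k`-core to the right by `λ_i - λ_{i+1}` lands in
row `i` and raises its hook by at most one; since the hook of `(i + 1, j)` is at most `k` and not
equal to `k`, the shifted cell is again on the `k`-boundary. This injects the boundary of row
`i + 1` into that of row `i`. Columns follow by transposing. -/

namespace YPartition

variable (lam : YPartition)

theorem lt_conj_iff {i j : ℕ} : i < lam.conj j ↔ j < lam.parts i := by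
  rw [conj, @Nat.lt_find_iff _ (Classical.decPred _)]
  push Not
  exact ⟨fun h => h i le_rfl, fun h n hn => h.trans_le (lam.antitone' n i hn)⟩

theorem conj_antitone : Antitone lam.conj := fun _ _ hj =>
  le_of_forall_lt fun _ hi => lam.lt_conj_iff.mpr (hj.trans_lt (lam.lt_conj_iff.mp hi))

theorem conj_eq_zero {j : ℕ} (hj : lam.parts 0 ≤ j) : lam.conj j = 0 :=
  Nat.eq_zero_of_not_pos fun h => (lam.lt_conj_iff.mp h).not_ge hj

noncomputable def transpose : YPartition :=
  ⟨lam.conj, fun _ _ h => lam.conj_antitone h, ⟨lam.parts 0, fun _ hj => lam.conj_eq_zero hj⟩⟩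

theorem transpose_conj : lam.transpose.conj = lam.parts :=
  funext fun _ => eq_of_forall_lt_iff fun _ => lam.transpose.lt_conj_iff.trans lam.lt_conj_iff

theorem mem_transpose {i j : ℕ} : lam.transpose.Mem (j, i) ↔ lam.Mem (i, j) :=
  lam.lt_conj_iff

theorem hook_transpose (i j : ℕ) : lam.transpose.hook j i = lam.hook i j := by
  simp only [hook, transpose_conj]
  exact congrArg (· - 1) (add_comm _ _)

theorem rsk_transpose (k j : ℕ) : rsk k lam.transpose j = csk k lam j := by
  simp only [rsk, csk, mem_transpose, hook_transpose]

theorem hook_shift_le {i j : ℕ} (hj : j < lam.parts (i + 1)) :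
    lam.hook i (j + (lam.parts i - lam.parts (i + 1))) ≤ lam.hook (i + 1) j + 1 := by
  have hrow := lam.antitone' i (i + 1) i.le_succ
  have hcol := lam.conj_antitone (Nat.le_add_right j (lam.parts i - lam.parts (i + 1)))
  have hlen := lam.lt_conj_iff.mpr hj
  unfold hook
  omega

variable {lam}

theorem IsCore.transpose {p : ℕ} (h : IsCore p lam) : IsCore p lam.transpose :=
  fun j i hm => lam.hook_transpose i j ▸ h i j (lam.mem_transpose.mp hm)

theorem IsCore.rsk_succ_le {k : ℕ} (h : IsCore k lam) (i : ℕ) :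
    rsk k lam (i + 1) ≤ rsk k lam i := by
  simp only [rsk, Nat.card_coe_set_eq]
  refine Set.ncard_le_ncard_of_injOn (· + (lam.parts i - lam.parts (i + 1))) ?_
    (add_left_injective _).injOn ((Set.finite_Iio (lam.parts i)).subset fun j hj => hj.1)
  rintro j ⟨hj : j < lam.parts (i + 1), hk⟩
  have hlt : lam.hook (i + 1) j < k := hk.lt_of_ne (h _ _ hj)
  have hrow := lam.antitone' i (i + 1) i.le_succ
  exact ⟨show j + _ < lam.parts i by omega, (lam.hook_shift_le hj).trans hlt⟩

theorem IsCore.rsk_antitone {k : ℕ} (h : IsCore k lam) : Antitone (rsk k lam) :=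
  antitone_nat_of_succ_le h.rsk_succ_le

end YPartition

theorem kcore_is_kshape_general (k : ℕ) (lam : YPartition)
    (h : IsCore k lam) : IsKShape k lam := by
  refine ⟨fun _ _ hi => h.rsk_antitone hi, fun j j' hj => ?_⟩
  simp only [← rsk_transpose]
  exact h.transpose.rsk_antitone hj

/-- Every k-core is a k-shape. -/
theorem kcore_is_kshape (k : ℕ) (hk : 2 ≤ k) (lam : YPartition)
    (h : IsCore k lam) : IsKShape k lam :=
  kcore_is_kshape_general k lam h
end

section
/- Let λ be a k-shape and r₁ > r₂ be two k-connected rows of λ. If s₁ is a row of λ with an addable corner and s₁ ≤ r₁, then the k-connected row s₂ below s₁ satisfies s₂ ≤ r₂. -/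
open Classical

open YPartition

/-! The diagonal index of the addable corner decreases as the row index grows. Hence the corner of
`r₂`, being within distance `k + 1` of the corner of `r₁`, is also within that distance of the
corner of any row between `r₂` and `r₁`, and minimality of `s₂` forces `s₂ ≤ r₂`. -/

theorem antitone_diagIdx_addCorner (lam : YPartition) :
    Antitone fun i => diagIdx (addCorner lam i) := by
  intro i j hij
  have hparts : lam.parts j ≤ lam.parts i := lam.antitone' i j hij
  simp only [diagIdx, addCorner]
  omega

theorem cellDist_addCorner_le_of_le (lam : YPartition) {i j l : ℕ} (hij : i ≤ j) (hjl : j ≤ l) :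
    cellDist (addCorner lam j) (addCorner lam i) ≤ cellDist (addCorner lam l) (addCorner lam i) := by
  have hji : diagIdx (addCorner lam j) ≤ diagIdx (addCorner lam i) :=
    antitone_diagIdx_addCorner lam hij
  have hlj : diagIdx (addCorner lam l) ≤ diagIdx (addCorner lam j) :=
    antitone_diagIdx_addCorner lam hjl
  simp only [cellDist]
  omega

theorem KConnectedBelow.le_of_cellDist_le {k : ℕ} {lam : YPartition} {r r' r'' : ℕ}
    (h : KConnectedBelow k lam r r') (hadd : HasAddable lam r'')
    (hdist : cellDist (addCorner lam r) (addCorner lam r'') ≤ k + 1) : r' ≤ r'' := by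
  by_contra! hlt
  exact h.2.2.2.2 r'' hlt hadd hdist

theorem connected_row_below_general (k : ℕ) (lam : YPartition)
    (r₁ r₂ : ℕ) (h12 : KConnectedBelow k lam r₁ r₂)
    (s₁ s₂ : ℕ) (hs : s₁ ≤ r₁) (hconn : KConnectedBelow k lam s₁ s₂) :
    s₂ ≤ r₂ := by
  rcases le_or_gt s₁ r₂ with hsr | hrs
  · exact (hconn.1.trans_le hsr).le
  · exact hconn.le_of_cellDist_le h12.2.2.1
      ((cellDist_addCorner_le_of_le lam hrs.le hs).trans h12.2.2.2.1)

/-- rows weakly below k-connected rows connect weakly below. -/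
theorem connected_row_below (k : ℕ) (hk : 2 ≤ k) (lam : YPartition)
    (hsh : IsKShape k lam) (r₁ r₂ : ℕ) (h12 : KConnectedBelow k lam r₁ r₂)
    (s₁ s₂ : ℕ) (hs : s₁ ≤ r₁) (hconn : KConnectedBelow k lam s₁ s₂) :
    s₂ ≤ r₂ :=
  connected_row_below_general k lam r₁ r₂ h12 s₁ s₂ hs hconn
end
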